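/- arXiv:2010.11447 — 3 statements merged into one kernel-verified Lean document; each statement's English description precedes it below -/
import Mathlib

section
/- Let n, k, j be positive integers. Let K be an n×n real matrix, W and C n×k real matrices, R an invertible k×k real matrix with K·W = C·R, V_{j+1} an n×(j+1) real matrix with first column v₁, V_j the n×j matrix of its first j columns, B_j a k×j real matrix, and T̲_j a (j+1)×j real matrix such that K·V_j = C·B_j + V_{j+1}·T̲_j. Let u₀, f ∈ ℝⁿ with f − K·u₀ = β·v₁ for some β ∈ ℝ. Then for all y ∈ ℝʲ and z ∈ ℝᵏ, setting u_j = u₀ + W·z + V_j·y, one has f − K·u_j = V_{j+1}·(β·e₁ − T̲_j·y) − C·(B_j·y + R·z), where e₁ is the first standard basis vector of ℝ^{j+1}. -/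
open Matrix

/-- First standard basis vector of `ℝ^{j+1}`. -/
def e₁ (j : ℕ) : Fin (j + 1) → ℝ := fun i => if i = 0 then 1 else 0

theorem e₁_eq_single (j : ℕ) : e₁ j = Pi.single 0 1 := by
  funext i
  simp [e₁, Pi.single_apply]

theorem mulVec_e₁ {m : Type*} [Fintype m] {j : ℕ} (V : Matrix m (Fin (j + 1)) ℝ) :
    V *ᵥ e₁ j = fun r => V r 0 := by
  rw [e₁_eq_single, mulVec_single_one]
  rfl

theorem recycling_minres_residual_form_general
    (n k j : ℕ)
    (K : Matrix (Fin n) (Fin n) ℝ) (W C : Matrix (Fin n) (Fin k) ℝ)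
    (R : Matrix (Fin k) (Fin k) ℝ) (hKW : K * W = C * R)
    (V : Matrix (Fin n) (Fin (j + 1)) ℝ)
    (B : Matrix (Fin k) (Fin j) ℝ) (T : Matrix (Fin (j + 1)) (Fin j) ℝ)
    (hLanczos : K * V.submatrix id Fin.castSucc = C * B + V * T)
    (u₀ f : Fin n → ℝ) (β : ℝ)
    (hres : f - K.mulVec u₀ = β • fun r => V r 0) :
    ∀ (y : Fin j → ℝ) (z : Fin k → ℝ),
      f - K.mulVec (u₀ + W.mulVec z + (V.submatrix id Fin.castSucc).mulVec y) =
        V.mulVec (β • e₁ j - T.mulVec y) - C.mulVec (B.mulVec y + R.mulVec z) := by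
  intro y z
  have hKWz : K *ᵥ (W *ᵥ z) = C *ᵥ (R *ᵥ z) := by
    rw [mulVec_mulVec, mulVec_mulVec, hKW]
  have hKVy : K *ᵥ (V.submatrix id Fin.castSucc *ᵥ y) = C *ᵥ (B *ᵥ y) + V *ᵥ (T *ᵥ y) := by
    rw [mulVec_mulVec, mulVec_mulVec, mulVec_mulVec, hLanczos, add_mulVec]
  rw [mulVec_add, mulVec_add, mulVec_sub, mulVec_add, mulVec_smul, mulVec_e₁, hKWz, hKVy, ← hres]
  module

/-- In recycling MINRES, with the augmented Lanczos relation
`K·V_j = C·B_j + V_{j+1}·T̲_j` and residual `f − K·u₀ = β·v₁`, the residual of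
`u_j = u₀ + W·z + V_j·y` is
`V_{j+1}·(β·e₁ − T̲_j·y) − C·(B_j·y + R·z)`. -/
theorem recycling_minres_residual_form
    (n k j : ℕ) (hn : 0 < n) (hk : 0 < k) (hj : 0 < j)
    (K : Matrix (Fin n) (Fin n) ℝ) (W C : Matrix (Fin n) (Fin k) ℝ)
    (R : Matrix (Fin k) (Fin k) ℝ) [Invertible R] (hKW : K * W = C * R)
    (V : Matrix (Fin n) (Fin (j + 1)) ℝ)
    (B : Matrix (Fin k) (Fin j) ℝ) (T : Matrix (Fin (j + 1)) (Fin j) ℝ)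
    (hLanczos : K * V.submatrix id Fin.castSucc = C * B + V * T)
    (u₀ f : Fin n → ℝ) (β : ℝ)
    (hres : f - K.mulVec u₀ = β • fun r => V r 0) :
    ∀ (y : Fin j → ℝ) (z : Fin k → ℝ),
      f - K.mulVec (u₀ + W.mulVec z + (V.submatrix id Fin.castSucc).mulVec y) =
        V.mulVec (β • e₁ j - T.mulVec y) - C.mulVec (B.mulVec y + R.mulVec z) :=
  recycling_minres_residual_form_general n k j K W C R hKW V B T hLanczos u₀ f β hres
end

section
/- Let n, m, k be positive integers with k ≤ m. Let K be an n×n real matrix, U an n×(m+1) real matrix with Uᵀ·U = I_{m+1}, partitioned as U = [U_a | U_c] with U_a its first k columns, U_m the first m columns of U, H' an (m+1)×m real matrix, and G an n×m real matrix with K·U_m = U·H' + G and U_aᵀ·G = 0. Define H = Uᵀ·K·U_m and R_new = K·U_m − U·H. Then R_new = G − U_c·(U_cᵀ·G) and Uᵀ·R_new = 0; moreover, every column of G that is zero gives a zero column of R_new (so if only the first k−1 columns of G are nonzero, only the first k−1 columns of R_new can be nonzero). -/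
/-!
Since `Uᵀ U = I`, the corrected Rayleigh quotient absorbs the `U H'` part of `K U_m` exactly, so
`R_new = (I - U Uᵀ) G`. Splitting `U Uᵀ = U_a U_aᵀ + U_c U_cᵀ` and using `U_aᵀ G = 0` leaves
`R_new = G - U_c U_cᵀ G`; orthogonality to `range U` and the zero columns are then read off
`R_new = (I - U Uᵀ) G`.
-/

open Matrix

namespace Matrix

variable {R l m n ι α β : Type*}

theorem submatrix_transpose_mul [NonUnitalNonAssocSemiring R] [Fintype l] (U : Matrix l ι R)
    (G : Matrix l n R) (f : α → ι) :
    (Uᵀ * G).submatrix f id = (U.submatrix id f)ᵀ * G := by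
  ext; rfl

theorem mul_eq_add_of_sumEquiv [Semiring R] [Fintype ι] [Fintype α] [Fintype β]
    (e : α ⊕ β ≃ ι) (A : Matrix m ι R) (B : Matrix ι n R) :
    A * B = A.submatrix id (e ∘ Sum.inl) * B.submatrix (e ∘ Sum.inl) id +
      A.submatrix id (e ∘ Sum.inr) * B.submatrix (e ∘ Sum.inr) id := by
  have hA : fromCols (A.submatrix id (e ∘ Sum.inl)) (A.submatrix id (e ∘ Sum.inr)) =
      A.submatrix id e := by
    ext i (j | j) <;> rfl
  have hB : fromRows (B.submatrix (e ∘ Sum.inl) id) (B.submatrix (e ∘ Sum.inr) id) =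
      B.submatrix e id := by
    ext (i | i) j <;> rfl
  rw [← fromCols_mul_fromRows, hA, hB, submatrix_mul_equiv, submatrix_id_id]

theorem mul_transpose_mul_eq_of_transpose_mul_eq_zero [Semiring R] [Fintype l] [Fintype ι]
    [Fintype α] [Fintype β]
    (e : α ⊕ β ≃ ι) (U : Matrix l ι R) (G : Matrix l n R)
    (hG : (U.submatrix id (e ∘ Sum.inl))ᵀ * G = 0) :
    U * (Uᵀ * G) = U.submatrix id (e ∘ Sum.inr) * ((U.submatrix id (e ∘ Sum.inr))ᵀ * G) := by
  rw [mul_eq_add_of_sumEquiv e, submatrix_transpose_mul, submatrix_transpose_mul, hG,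
    Matrix.mul_zero, zero_add]

theorem mul_apply_eq_zero_of_forall_apply_eq_zero [NonUnitalNonAssocSemiring R] [Fintype ι]
    (A : Matrix l ι R) {B : Matrix ι n R} {c : n} (hc : ∀ i, B i c = 0) (i : l) :
    (A * B) i c = 0 := by
  simp only [mul_apply, hc, mul_zero, Finset.sum_const_zero]

variable [Ring R] [Fintype l] [Fintype m] [DecidableEq m]

theorem sub_mul_transpose_mul_of_eq_mul_add {U : Matrix l m R} (hU : Uᵀ * U = 1)
    {X G : Matrix l n R} {H : Matrix m n R} (hX : X = U * H + G) :
    X - U * (Uᵀ * X) = G - U * (Uᵀ * G) := by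
  rw [hX, Matrix.mul_add Uᵀ, ← Matrix.mul_assoc Uᵀ U, hU, Matrix.one_mul, Matrix.mul_add U]
  abel

theorem transpose_mul_sub_mul_transpose_mul {U : Matrix l m R} (hU : Uᵀ * U = 1)
    (G : Matrix l n R) : Uᵀ * (G - U * (Uᵀ * G)) = 0 := by
  rw [Matrix.mul_sub, ← Matrix.mul_assoc, hU, Matrix.one_mul, sub_self]

end Matrix

/-- In the warm-start Krylov–Schur algorithm, the new residual
`R_new = K·U_m − U·H` (with corrected Rayleigh quotient `H = Uᵀ·K·U_m`)
equals `G − U_c·(U_cᵀ·G)`, is orthogonal to `range(U)`, and each zero column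
of `G` gives a zero column of `R_new`. -/
theorem warm_start_new_residual
    (n m k : ℕ) (hkm : k ≤ m)
    (K : Matrix (Fin n) (Fin n) ℝ)
    (U : Matrix (Fin n) (Fin (m + 1)) ℝ) (hU : Uᵀ * U = 1)
    (H' : Matrix (Fin (m + 1)) (Fin m) ℝ) (G : Matrix (Fin n) (Fin m) ℝ)
    (hKU : K * U.submatrix id Fin.castSucc = U * H' + G)
    (hG : (U.submatrix id fun i : Fin k =>
        (⟨i.1, by have := i.2; omega⟩ : Fin (m + 1)))ᵀ * G = 0)
    (H : Matrix (Fin (m + 1)) (Fin m) ℝ)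
    (hH : H = Uᵀ * K * U.submatrix id Fin.castSucc)
    (Rnew : Matrix (Fin n) (Fin m) ℝ)
    (hRnew : Rnew = K * U.submatrix id Fin.castSucc - U * H) :
    (Rnew =
      G - (U.submatrix id fun i : Fin (m + 1 - k) =>
            (⟨k + i.1, by have := i.2; omega⟩ : Fin (m + 1))) *
          ((U.submatrix id fun i : Fin (m + 1 - k) =>
            (⟨k + i.1, by have := i.2; omega⟩ : Fin (m + 1)))ᵀ * G)) ∧
    Uᵀ * Rnew = 0 ∧
    (∀ c : Fin m, (∀ i : Fin n, G i c = 0) → ∀ i : Fin n, Rnew i c = 0) := by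
  have hproj : Rnew = G - U * (Uᵀ * G) := by
    rw [hRnew, hH, Matrix.mul_assoc Uᵀ, sub_mul_transpose_mul_of_eq_mul_add hU hKU]
  let e : Fin k ⊕ Fin (m + 1 - k) ≃ Fin (m + 1) :=
    finSumFinEquiv.trans (finCongr (by omega))
  refine ⟨?_, ?_, fun c hc i => ?_⟩
  · rw [hproj, mul_transpose_mul_eq_of_transpose_mul_eq_zero e U G hG]
    rfl -- `e ∘ Sum.inr` is `fun i => ⟨k + i, _⟩` by unfolding
  · rw [hproj, transpose_mul_sub_mul_transpose_mul hU]
  · rw [hproj, Matrix.sub_apply, hc i,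
      mul_apply_eq_zero_of_forall_apply_eq_zero U (mul_apply_eq_zero_of_forall_apply_eq_zero _ hc),
      sub_zero]
end

section
/- Let n, k be positive integers and m ≥ k. Let R̃ be an n×k real matrix, P a k×(k−1) real matrix with Pᵀ·P = I_{k−1}, and U_c an n×(m+1−k) real matrix with U_cᵀ·U_c = I. Set R = R̃·P, let G = [R | 0] be the n×m matrix whose first k−1 columns are R and remaining columns are zero, and set R_new = G − U_c·(U_cᵀ·G). Then ‖R_new‖_F ≤ ‖R‖_F ≤ ‖R̃‖_F, where ‖·‖_F denotes the Frobenius norm; i.e., each restart of the warm-start Krylov–Schur cycle does not increase the Frobenius norm of the residual matrix. -/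
/-
Both `X ↦ X - U Uᵀ X` and `X ↦ Uᵀ X` (for `U` with orthonormal columns) split `XᵀX` orthogonally:
`Xᵀ X = (X - U Uᵀ X)ᵀ (X - U Uᵀ X) + (Uᵀ X)ᵀ (Uᵀ X)`, so taking traces bounds the squared
Frobenius norm of each piece by that of `X`. Right multiplication by `P` with `Pᵀ P = 1` is the
transpose of the second map, and padding with zero columns does not change the norm.
-/

open Matrix

/-- Frobenius norm of a real matrix. -/
noncomputable def frobNorm {a b : ℕ} (A : Matrix (Fin a) (Fin b) ℝ) : ℝ :=
  Real.sqrt (∑ i, ∑ j, A i j ^ 2)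

theorem Fin.sum_dite_lt_eq_sum {M : Type*} [AddCommMonoid M] {a b : ℕ} (hab : a ≤ b)
    (f : Fin a → M) :
    ∑ j : Fin b, (if h : j.1 < a then f ⟨j.1, h⟩ else 0) = ∑ j, f j := by
  rw [← Finset.sum_subset (Finset.subset_univ (Finset.univ.map (Fin.castLEEmb hab))),
    Finset.sum_map]
  · exact Finset.sum_congr rfl fun j _ => by simp
  · intro j _ hj
    rw [dif_neg]
    exact fun h => hj (Finset.mem_map.mpr ⟨⟨j.1, h⟩, Finset.mem_univ _, rfl⟩)

section Orthonormal

variable {𝕜 ι κ ν : Type*} [Fintype ι] [Fintype κ]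

theorem Matrix.trace_transpose_mul_self_eq_sum_sq [CommSemiring 𝕜] (A : Matrix ι κ 𝕜) :
    trace (Aᵀ * A) = ∑ i, ∑ j, A i j ^ 2 := by
  simp only [trace, diag, mul_apply, transpose_apply, sq]
  exact Finset.sum_comm

theorem Matrix.trace_transpose_mul_self_nonneg [CommRing 𝕜] [LinearOrder 𝕜] [IsOrderedRing 𝕜]
    (A : Matrix ι κ 𝕜) : 0 ≤ trace (Aᵀ * A) := by
  rw [trace_transpose_mul_self_eq_sum_sq]
  exact Finset.sum_nonneg fun i _ => Finset.sum_nonneg fun j _ => sq_nonneg _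

variable [CommRing 𝕜] [DecidableEq κ] {U : Matrix ι κ 𝕜}

theorem Matrix.transpose_mul_self_sub_orthogonalProj (hU : Uᵀ * U = 1) (X : Matrix ι ν 𝕜) :
    (X - U * (Uᵀ * X))ᵀ * (X - U * (Uᵀ * X)) = Xᵀ * X - (Uᵀ * X)ᵀ * (Uᵀ * X) := by
  have hUX : (U * (Uᵀ * X))ᵀ * (U * (Uᵀ * X)) = (Uᵀ * X)ᵀ * (Uᵀ * X) := by
    rw [transpose_mul, Matrix.mul_assoc, ← Matrix.mul_assoc Uᵀ, hU, Matrix.one_mul]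
  have hXU : Xᵀ * (U * (Uᵀ * X)) = (Uᵀ * X)ᵀ * (Uᵀ * X) := by
    rw [transpose_mul, transpose_transpose, Matrix.mul_assoc]
  have hUX' : (U * (Uᵀ * X))ᵀ * X = (Uᵀ * X)ᵀ * (Uᵀ * X) := by
    rw [transpose_mul, Matrix.mul_assoc]
  rw [transpose_sub, Matrix.sub_mul, Matrix.mul_sub, Matrix.mul_sub, hUX, hXU, hUX', sub_self,
    sub_zero]

variable [LinearOrder 𝕜] [IsOrderedRing 𝕜] [Fintype ν]

theorem Matrix.trace_sub_orthogonalProj_le (hU : Uᵀ * U = 1) (X : Matrix ι ν 𝕜) :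
    trace ((X - U * (Uᵀ * X))ᵀ * (X - U * (Uᵀ * X))) ≤ trace (Xᵀ * X) := by
  rw [transpose_mul_self_sub_orthogonalProj hU, trace_sub, sub_le_self_iff]
  exact trace_transpose_mul_self_nonneg _

theorem Matrix.trace_transpose_mul_le (hU : Uᵀ * U = 1) (X : Matrix ι ν 𝕜) :
    trace ((Uᵀ * X)ᵀ * (Uᵀ * X)) ≤ trace (Xᵀ * X) := by
  have h := trace_transpose_mul_self_nonneg (X - U * (Uᵀ * X))
  rwa [transpose_mul_self_sub_orthogonalProj hU, trace_sub, sub_nonneg] at h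

theorem Matrix.trace_mul_le_of_transpose_mul_self_eq_one {P : Matrix ι κ 𝕜} (hP : Pᵀ * P = 1)
    (B : Matrix ν ι 𝕜) : trace ((B * P)ᵀ * (B * P)) ≤ trace (Bᵀ * B) := by
  have h := trace_transpose_mul_le hP Bᵀ
  rwa [← transpose_mul, transpose_transpose, transpose_transpose, trace_mul_comm (B * P),
    trace_mul_comm B] at h

end Orthonormal

section Frobenius

variable {a b c : ℕ}

theorem frobNorm_eq_sqrt_trace (A : Matrix (Fin a) (Fin b) ℝ) :
    frobNorm A = √(trace (Aᵀ * A)) := by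
  rw [frobNorm, trace_transpose_mul_self_eq_sum_sq]

theorem frobNorm_sub_orthogonalProj_le {U : Matrix (Fin a) (Fin b) ℝ} (hU : Uᵀ * U = 1)
    (X : Matrix (Fin a) (Fin c) ℝ) : frobNorm (X - U * (Uᵀ * X)) ≤ frobNorm X := by
  simp only [frobNorm_eq_sqrt_trace]
  exact Real.sqrt_le_sqrt (trace_sub_orthogonalProj_le hU X)

theorem frobNorm_mul_le_of_transpose_mul_self_eq_one {P : Matrix (Fin a) (Fin b) ℝ}
    (hP : Pᵀ * P = 1) (B : Matrix (Fin c) (Fin a) ℝ) : frobNorm (B * P) ≤ frobNorm B := by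
  simp only [frobNorm_eq_sqrt_trace]
  exact Real.sqrt_le_sqrt (trace_mul_le_of_transpose_mul_self_eq_one hP B)

theorem frobNorm_of_dite_lt (hbc : b ≤ c) (A : Matrix (Fin a) (Fin b) ℝ) :
    frobNorm (Matrix.of fun i (j : Fin c) => if h : j.1 < b then A i ⟨j.1, h⟩ else 0) =
      frobNorm A := by
  simp only [frobNorm, of_apply, apply_dite (· ^ 2), ne_eq, OfNat.ofNat_ne_zero,
    not_false_eq_true, zero_pow]
  exact congrArg _ (Finset.sum_congr rfl fun i _ => Fin.sum_dite_lt_eq_sum hbc (A i · ^ 2))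

end Frobenius

theorem warm_start_residual_norm_nonincreasing_general
    (n k m : ℕ) (hkm : k ≤ m)
    (Rt : Matrix (Fin n) (Fin k) ℝ)
    (P : Matrix (Fin k) (Fin (k - 1)) ℝ) (hP : Pᵀ * P = 1)
    (Uc : Matrix (Fin n) (Fin (m + 1 - k)) ℝ) (hUc : Ucᵀ * Uc = 1)
    (R : Matrix (Fin n) (Fin (k - 1)) ℝ) (hR : R = Rt * P)
    (G : Matrix (Fin n) (Fin m) ℝ)
    (hG : G = Matrix.of fun (i : Fin n) (c : Fin m) =>
      if h : c.1 < k - 1 then R i ⟨c.1, h⟩ else 0)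
    (Rnew : Matrix (Fin n) (Fin m) ℝ)
    (hRnew : Rnew = G - Uc * (Ucᵀ * G)) :
    frobNorm Rnew ≤ frobNorm R ∧ frobNorm R ≤ frobNorm Rt := by
  have hGR : frobNorm G = frobNorm R := hG ▸ frobNorm_of_dite_lt (by omega) R
  refine ⟨?_, ?_⟩
  · rw [hRnew, ← hGR]
    exact frobNorm_sub_orthogonalProj_le hUc G
  · rw [hR]
    exact frobNorm_mul_le_of_transpose_mul_self_eq_one hP Rt

/-- Each restart of the warm-start Krylov–Schur cycle does not
increase the Frobenius norm of the residual matrix: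
`‖R_new‖_F ≤ ‖R‖_F ≤ ‖R̃‖_F`, where `R = R̃·P` with `P` having orthonormal
columns, `G = [R | 0]`, and `R_new = G − U_c·(U_cᵀ·G)`. -/
theorem warm_start_residual_norm_nonincreasing
    (n k m : ℕ) (hn : 0 < n) (hk : 0 < k) (hkm : k ≤ m)
    (Rt : Matrix (Fin n) (Fin k) ℝ)
    (P : Matrix (Fin k) (Fin (k - 1)) ℝ) (hP : Pᵀ * P = 1)
    (Uc : Matrix (Fin n) (Fin (m + 1 - k)) ℝ) (hUc : Ucᵀ * Uc = 1)
    (R : Matrix (Fin n) (Fin (k - 1)) ℝ) (hR : R = Rt * P)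
    (G : Matrix (Fin n) (Fin m) ℝ)
    (hG : G = Matrix.of fun (i : Fin n) (c : Fin m) =>
      if h : c.1 < k - 1 then R i ⟨c.1, h⟩ else 0)
    (Rnew : Matrix (Fin n) (Fin m) ℝ)
    (hRnew : Rnew = G - Uc * (Ucᵀ * G)) :
    frobNorm Rnew ≤ frobNorm R ∧ frobNorm R ≤ frobNorm Rt :=
  warm_start_residual_norm_nonincreasing_general n k m hkm Rt P hP Uc hUc R hR G hG Rnew hRnew
end
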